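/- Every Darboux injection f : X → ℝ from a path-connected Hausdorff topological space X to the real line is a topological embedding, i.e., a homeomorphism of X onto its image with the subspace topology. -/

import Mathlib

/-!
Along a path `γ`, the map `f ∘ γ` is a Darboux function on an interval whose fibres are closed
(they are subsingletons), and such a function is continuous: a connected neighbourhood of `t`
missing the fibre over `c` is mapped to one side of `c`. Hence `f` restricts to a homeomorphism
from the compact Hausdorff trace of `γ` onto a compact interval, and by the intermediate value
theorem this trace contains `f ⁻¹' [f p, f q]` when `γ` joins `p` to `q`. Therefore these preimages
are connected, and so are the preimages of closed rays. If `x` lay in the closure of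
`f ⁻¹' [c, ∞)` with `f x < c`, adding `x` to this set would keep it connected, so its image would
contain values in `(f x, c)`, which none of its points takes; so the rays pull back to closed sets
and `f` is continuous. Conversely, near `x` the induced topology only sees some `f ⁻¹' [f p, f q]`,
which lies in the trace of a path on which `f` is an embedding.
-/

open Set Topology Filter

section

variable {X Y α : Type*} [TopologicalSpace X] [TopologicalSpace Y] [TopologicalSpace α]

def IsDarboux (f : X → Y) : Prop :=
  ∀ C : Set X, IsPreconnected C → IsPreconnected (f '' C)

theorem isClosedEmbedding_domRestrict_range [CompactSpace Y] [T2Space X] [T2Space α]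
    {φ : Y → X} (hφ : Continuous φ) {f : X → α} (hinj : Function.Injective f)
    (hfφ : Continuous (f ∘ φ)) : IsClosedEmbedding ((range φ).domRestrict f) := by
  have : CompactSpace (range φ) := isCompact_iff_compactSpace.mp (isCompact_range hφ)
  have hq : IsQuotientMap (rangeFactorization φ) :=
    hφ.rangeFactorization.isClosedMap.isQuotientMap hφ.rangeFactorization
      rangeFactorization_surjective
  exact (hq.continuous_iff.2 hfφ).isClosedEmbedding hinj.injOn.injective

theorem Path.preimage_Icc_subset_range [LinearOrder α] [OrderClosedTopology α] {f : X → α}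
    (hinj : Function.Injective f) {p q : X} (γ : Path p q) (hγ : Continuous (f ∘ γ)) :
    f ⁻¹' Icc (f p) (f q) ⊆ range γ := fun x hx => by
  obtain ⟨t, ht⟩ := intermediate_value_univ 0 1 hγ (by simpa using hx)
  exact ⟨t, hinj ht⟩

theorem exists_preimage_Ici_mem_comap_nhds {β : Type*} [LinearOrder α] [OrderTopology α]
    (f : β → α) (x : β) : ∃ p, f ⁻¹' Ici (f p) ∈ comap f (𝓝 (f x)) := by
  by_cases h : ∃ y, f y < f x
  · obtain ⟨y, hy⟩ := h
    exact ⟨y, preimage_mem_comap (mem_of_superset (Ioi_mem_nhds hy) Ioi_subset_Ici_self)⟩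
  · exact ⟨x, univ_mem' fun y => not_lt.1 fun hy => h ⟨y, hy⟩⟩

namespace IsDarboux

theorem comp_continuous {f : X → Y} (hf : IsDarboux f) {φ : α → X} (hφ : Continuous φ) :
    IsDarboux (f ∘ φ) := fun C hC => by
  rw [image_comp]
  exact hf _ (hC.image φ hφ.continuousOn)

theorem continuous_of_isClosed_preimage_singleton [LocallyConnectedSpace X] [LinearOrder α]
    [OrderTopology α] {g : X → α} (hg : IsDarboux g) (hfib : ∀ c, IsClosed (g ⁻¹' {c})) :
    Continuous g := by
  have avoid : ∀ x c, g x ≠ c → ∀ᶠ y in 𝓝 x, c ∉ Icc (g x) (g y) ∧ c ∉ Icc (g y) (g x) := by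
    intro x c hxc
    set N := connectedComponentIn (g ⁻¹' {c})ᶜ x
    have hN : IsPreconnected (g '' N) := hg N isPreconnected_connectedComponentIn
    have hcN : c ∉ g '' N := fun ⟨z, hz, hzc⟩ => connectedComponentIn_subset _ _ hz hzc
    have hxN : g x ∈ g '' N := mem_image_of_mem g (mem_connectedComponentIn hxc)
    filter_upwards [connectedComponentIn_mem_nhds ((hfib c).isOpen_compl.mem_nhds hxc)] with y hy
    exact ⟨fun h => hcN (hN.Icc_subset hxN (mem_image_of_mem g hy) h),
      fun h => hcN (hN.Icc_subset (mem_image_of_mem g hy) hxN h)⟩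
  refine continuous_iff_continuousAt.2 fun x => tendsto_order.2 ⟨fun c hc => ?_, fun c hc => ?_⟩
  · filter_upwards [avoid x c hc.ne'] with y hy
    exact lt_of_not_ge fun hyc => hy.2 ⟨hyc, hc.le⟩
  · filter_upwards [avoid x c hc.ne] with y hy
    exact lt_of_not_ge fun hyc => hy.1 ⟨hc.le, hyc⟩

theorem continuous_comp_path [T1Space X] [LinearOrder α] [OrderTopology α] {f : X → α}
    (hf : IsDarboux f) (hinj : Function.Injective f) {p q : X} (γ : Path p q) :
    Continuous (f ∘ γ) := by
  have hext : Continuous (f ∘ γ.extend) :=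
    (hf.comp_continuous γ.continuous_extend).continuous_of_isClosed_preimage_singleton
      fun c => ((subsingleton_singleton.preimage hinj).isClosed).preimage γ.continuous_extend
  convert hext.comp continuous_subtype_val using 1
  exact funext fun t => congrArg f (γ.extend_extends' t).symm

theorem comap_nhds_le_nhds [T2Space X] [PathConnectedSpace X] [LinearOrder α] [OrderTopology α]
    {f : X → α} (hf : IsDarboux f) (hinj : Function.Injective f) (x : X) :
    comap f (𝓝 (f x)) ≤ 𝓝 x := by
  obtain ⟨p, hp⟩ := exists_preimage_Ici_mem_comap_nhds f x
  obtain ⟨q, hq⟩ := exists_preimage_Ici_mem_comap_nhds (α := αᵒᵈ) f x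
  obtain ⟨γ⟩ := PathConnectedSpace.joined p q
  have hγ := hf.continuous_comp_path hinj γ
  have hK : range γ ∈ comap f (𝓝 (f x)) :=
    mem_of_superset (inter_mem hp hq) fun y hy => γ.preimage_Icc_subset_range hinj hγ hy
  have hxK : x ∈ range γ := by
    obtain ⟨V, hV, hVK⟩ := mem_comap.1 hK
    exact hVK (show f x ∈ V from mem_of_mem_nhds hV)
  have he := (isClosedEmbedding_domRestrict_range γ.continuous hinj hγ).isInducing
  intro W hW
  have hW' := continuous_subtype_val.continuousAt.preimage_mem_nhds (x := ⟨x, hxK⟩) hW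
  obtain ⟨V, hV, hVW⟩ := mem_comap.1 (he.nhds_eq_comap _ ▸ hW')
  exact mem_of_superset (inter_mem (preimage_mem_comap hV) hK) fun y hy => hVW (a := ⟨y, hy.2⟩) hy.1

section ConnectedOrder

variable [T2Space X] [PathConnectedSpace X]
  [ConditionallyCompleteLinearOrder α] [OrderTopology α] [DenselyOrdered α]
  {f : X → α} (hf : IsDarboux f) (hinj : Function.Injective f)
include hf hinj

theorem isPreconnected_preimage_Icc (p q : X) : IsPreconnected (f ⁻¹' Icc (f p) (f q)) := by
  obtain ⟨γ⟩ := PathConnectedSpace.joined p q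
  have hγ := hf.continuous_comp_path hinj γ
  set e := (range γ).domRestrict f
  have hIcc : Icc (f p) (f q) ⊆ range e := fun c hc => by
    obtain ⟨t, rfl⟩ := intermediate_value_univ 0 1 hγ (by simpa using hc)
    exact ⟨⟨γ t, t, rfl⟩, rfl⟩
  have hE : f ⁻¹' Icc (f p) (f q) = Subtype.val '' (e ⁻¹' Icc (f p) (f q)) := by
    exact ((Subtype.image_preimage_coe _ _).trans
      (inter_eq_right.2 (γ.preimage_Icc_subset_range hinj hγ))).symm
  rw [hE]
  refine IsPreconnected.image ?_ _ continuous_subtype_val.continuousOn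
  rw [← (isClosedEmbedding_domRestrict_range γ.continuous hinj hγ).isInducing.isPreconnected_image,
    image_preimage_eq_of_subset hIcc]
  exact isPreconnected_Icc

theorem isPreconnected_preimage_Ici (c : α) : IsPreconnected (f ⁻¹' Ici c) := by
  refine isPreconnected_of_forall_pair fun x hx y hy => ?_
  rcases le_total (f x) (f y) with hxy | hyx
  · exact ⟨f ⁻¹' Icc (f x) (f y), fun z hz => hx.trans hz.1, ⟨le_rfl, hxy⟩, ⟨hxy, le_rfl⟩,
      hf.isPreconnected_preimage_Icc hinj x y⟩
  · exact ⟨f ⁻¹' Icc (f y) (f x), fun z hz => hy.trans hz.1, ⟨hyx, le_rfl⟩, ⟨le_rfl, hyx⟩,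
      hf.isPreconnected_preimage_Icc hinj y x⟩

theorem isClosed_preimage_Ici (c : α) : IsClosed (f ⁻¹' Ici c) := by
  refine closure_subset_iff_isClosed.1 fun x hx => not_lt.1 fun hxc => ?_
  obtain ⟨y, hy⟩ := closure_nonempty_iff.1 ⟨x, hx⟩
  have hT : IsPreconnected (insert x (f ⁻¹' Ici c)) :=
    (hf.isPreconnected_preimage_Ici hinj c).subset_closure (subset_insert _ _)
      (insert_subset hx subset_closure)
  obtain ⟨d, hxd, hdc⟩ := exists_between hxc
  obtain ⟨z, hz, rfl⟩ := (hf _ hT).Icc_subset (mem_image_of_mem f (mem_insert x _))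
    (mem_image_of_mem f (mem_insert_of_mem x hy)) ⟨hxd.le, hdc.le.trans hy⟩
  rcases hz with rfl | hz
  exacts [hxd.false, (hdc.trans_le hz).false]

protected theorem continuous : Continuous f := by
  refine OrderTopology.continuous_iff.2 fun c => ⟨?_, ?_⟩
  · rw [← compl_Iic, preimage_compl, isOpen_compl_iff]
    exact isClosed_preimage_Ici (α := αᵒᵈ) (f := f) hf hinj c
  · rw [← compl_Ici, preimage_compl, isOpen_compl_iff]
    exact hf.isClosed_preimage_Ici hinj c

theorem isEmbedding : IsEmbedding f :=
  ⟨isInducing_iff_nhds.2 fun x =>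
    le_antisymm (hf.continuous hinj).continuousAt.le_comap (hf.comap_nhds_le_nhds hinj x), hinj⟩

end ConnectedOrder

end IsDarboux

end

/-- Every Darboux injection `f : X → ℝ` from a path-connected Hausdorff space
(an injective map sending connected sets to connected sets) is a topological embedding. -/
theorem darboux_injection_pathConnected_isEmbedding {X : Type*} [TopologicalSpace X]
    [PathConnectedSpace X] [T2Space X] (f : X → ℝ)
    (hinj : Function.Injective f)
    (hdarboux : ∀ C : Set X, IsPreconnected C → IsPreconnected (f '' C)) :
    Topology.IsEmbedding f :=
  IsDarboux.isEmbedding hdarboux hinj
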